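/- For every μ with 0 < μ ≤ 1/3 and every λ ≥ 3, the inequality H(λ,μ) ≥ (μλ/4)·ln(min{λ, 1/μ}) holds, where H(λ,μ) = μλ·ln λ − (1+μλ)·ln((1+μλ)/(1+μ)). -/

import Mathlib

open Real Set

/-!
Put `x = μλ`. Along the hyperbola `μλ = x` the function `λ ↦ H(λ, x/λ) - (x/4) log λ` is
nondecreasing as soon as `3λ ≥ 4(1 + x)`, by the tangent-line bounds `1 - 1/t ≤ log t ≤ t - 1`.
Since `min λ (1/μ) = λ / max 1 x`, this reduces the claim to the boundary of the region:
`λ = 3` when `x ≤ 1`, and `μ = 1/3` (that is `λ = 3x`) when `x ≥ 1`. On both pieces convexity of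
`t log t` (a chord in the first case, a midpoint in the second) leaves only the numerical fact
`2 log (3/2) ≤ (3/4) log 3`, i.e. `(3/2)^8 ≤ 3^3`: the claim at the corner `λ = 3, μ = 1/3`.
-/

noncomputable def H (lam mu : ℝ) : ℝ :=
  mu * lam * log lam - (1 + mu * lam) * log ((1 + mu * lam) / (1 + mu))

lemma two_log_three_halves_le : 2 * log (3 / 2) ≤ 3 / 4 * log 3 := by
  have h : log ((3 / 2) ^ 8) ≤ log (3 ^ 3) := log_le_log (by norm_num) (by norm_num)
  rw [log_pow, log_pow] at h
  push_cast at h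
  linarith

lemma mul_log_le_of_one_le_of_le {t b : ℝ} (ht : 1 ≤ t) (htb : t ≤ b) :
    (b - 1) * (t * log t) ≤ (t - 1) * (b * log b) := by
  rcases htb.eq_or_lt with rfl | htb
  · exact le_rfl
  have hb : 0 < b - 1 := by linarith
  have h := convexOn_mul_log.2 (mem_Ici.2 zero_le_one) (mem_Ici.2 (by linarith : (0:ℝ) ≤ b))
    (div_nonneg (by linarith : 0 ≤ b - t) hb.le) (div_nonneg (by linarith : 0 ≤ t - 1) hb.le)
    (by field_simp; ring)
  have ht' : (b - t) / (b - 1) * 1 + (t - 1) / (b - 1) * b = t := by field_simp; ring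
  simp only [smul_eq_mul, log_one, mul_zero, ht'] at h
  rw [← le_div_iff₀' hb]
  linarith [show (t - 1) / (b - 1) * (b * log b) = (t - 1) * (b * log b) / (b - 1) by ring]

lemma add_mul_log_div_two_le {a b : ℝ} (ha : 0 ≤ a) (hb : 0 ≤ b) :
    (a + b) * log ((a + b) / 2) ≤ a * log a + b * log b := by
  have h := convexOn_mul_log.2 (mem_Ici.2 ha) (mem_Ici.2 hb) (by norm_num : (0:ℝ) ≤ 1 / 2)
    (by norm_num : (0:ℝ) ≤ 1 / 2) (by norm_num)
  simp only [smul_eq_mul] at h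
  rw [show 1 / 2 * a + 1 / 2 * b = (a + b) / 2 by ring] at h
  linarith

lemma H_div_eq {l x : ℝ} (hl : 0 < l) (hx : 0 ≤ x) :
    H l (x / l) = x * log l - (1 + x) * (log l - log (l + x) + log (1 + x)) := by
  have hlx : 0 < l + x := by linarith
  have : (1 + x) / (1 + x / l) = l / (l + x) * (1 + x) := by field_simp
  rw [H, div_mul_cancel₀ x hl.ne', this, log_mul (by positivity) (by positivity),
    log_div hl.ne' hlx.ne']

lemma monotoneOn_H_div_sub (x : ℝ) (hx : 0 ≤ x) :
    MonotoneOn (fun l ↦ H l (x / l) - x / 4 * log l) (Ici (4 * (1 + x) / 3)) := by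
  intro a ha b hb hab
  have ha0 : 0 < a := by rw [mem_Ici] at ha; linarith
  have hb0 : 0 < b := ha0.trans_le hab
  have hlog : (b - a) / b ≤ log b - log a := by
    have h := one_sub_inv_le_log_of_pos (div_pos hb0 ha0)
    rw [log_div hb0.ne' ha0.ne', inv_div] at h
    linarith [show 1 - a / b = (b - a) / b by field_simp]
  have hgap : log b - log (b + x) - (log a - log (a + x)) ≤ x * (b - a) / (a * (b + x)) := by
    have h := log_le_sub_one_of_pos (show 0 < b * (a + x) / (a * (b + x)) by positivity)
    rw [log_div (by positivity) (by positivity), log_mul hb0.ne' (by positivity),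
      log_mul ha0.ne' (by positivity)] at h
    have hsub : b * (a + x) / (a * (b + x)) - 1 = x * (b - a) / (a * (b + x)) := by
      field_simp; ring
    linarith
  have hcoef : (1 + x) * (x * (b - a) / (a * (b + x))) ≤ 3 * x / 4 * ((b - a) / b) := by
    rw [mem_Ici] at ha
    rw [mul_div_assoc', mul_div_assoc', div_le_div_iff₀ (by positivity) (by positivity)]
    have : 0 ≤ x * (b - a) := mul_nonneg hx (by linarith)
    nlinarith [mul_nonneg this (mul_nonneg hb0.le (by linarith : 0 ≤ 3 * a - 4 * (1 + x))),
      mul_nonneg this (mul_nonneg ha0.le hx)]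
  simp only [H_div_eq ha0 hx, H_div_eq hb0 hx]
  nlinarith [mul_le_mul_of_nonneg_left hgap (by linarith : 0 ≤ 1 + x),
    mul_le_mul_of_nonneg_left hlog (by linarith : 0 ≤ 3 * x / 4)]

lemma mul_log_three_le_H_three_div {x : ℝ} (hx0 : 0 ≤ x) (hx1 : x ≤ 1) :
    x / 4 * log 3 ≤ H 3 (x / 3) := by
  set t := 3 * (1 + x) / (3 + x) with ht
  have ht1 : 1 ≤ t := by rw [ht, le_div_iff₀ (by positivity)]; linarith
  have ht2 : t ≤ 3 / 2 := by rw [ht, div_le_iff₀ (by positivity)]; linarith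
  have hH : H 3 (x / 3) = x * log 3 - (3 + x) / 3 * (t * log t) := by
    rw [H, show (1 + x / 3) = (3 + x) / 3 by ring, ht]
    field_simp
  have hx3 : (3 + x) * (t - 1) = 2 * x := by rw [ht]; field_simp; ring
  have hchord := mul_le_mul_of_nonneg_left (mul_log_le_of_one_le_of_le ht1 ht2)
    (by positivity : 0 ≤ 2 * (3 + x) / 3)
  have hc := mul_le_mul_of_nonneg_left two_log_three_halves_le hx0
  rw [hH]
  linear_combination hchord + hc + log (3 / 2) * hx3

lemma mul_log_three_le_H_three_mul {x : ℝ} (hx : 1 ≤ x) :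
    x / 4 * log 3 ≤ H (3 * x) (1 / 3) := by
  have hx0 : 0 < x := by linarith
  have hH : H (3 * x) (1 / 3) =
      x * log 3 + x * log x - (1 + x) * (log (3 / 2) + log ((1 + x) / 2)) := by
    rw [H, show 1 / 3 * (3 * x) = x by ring, ← log_mul (by norm_num) (by positivity),
      show 3 / 2 * ((1 + x) / 2) = (1 + x) / (1 + 1 / 3) by ring, log_mul (by norm_num) hx0.ne']
    ring
  have hmid := add_mul_log_div_two_le zero_le_one hx0.le
  simp only [one_mul, log_one, zero_add] at hmid
  have hc := mul_le_mul_of_nonneg_left two_log_three_halves_le (by linarith : 0 ≤ (1 + x) / 2)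
  have hlog3 : 0 ≤ log 3 := log_nonneg (by norm_num)
  rw [hH]
  nlinarith [mul_le_mul_of_nonneg_left hlog3 (by linarith : 0 ≤ x - 1)]

theorem H_approx_four (mu : ℝ) (hmu : 0 < mu) (hmu' : mu ≤ 1 / 3)
    (lam : ℝ) (hlam : 3 ≤ lam) :
    mu * lam / 4 * Real.log (min lam (1 / mu)) ≤ (mu * lam * Real.log lam - (1 + mu * lam) * Real.log ((1 + mu * lam) / (1 + mu))) := by
  have hlam0 : 0 < lam := by linarith
  set x := mu * lam with hx
  have hx0 : 0 < x := by positivity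
  have hmu_eq : mu = x / lam := by rw [hx, mul_div_cancel_right₀ _ hlam0.ne']
  have hmono := monotoneOn_H_div_sub x hx0.le
  change x / 4 * log (min lam (1 / mu)) ≤ H lam mu
  rcases le_total x 1 with hx1 | hx1
  · have hmin : min lam (1 / mu) = lam := min_eq_left (by rw [le_div_iff₀ hmu]; linarith)
    have h := hmono (a := 3) (b := lam) (by rw [mem_Ici]; linarith) (by rw [mem_Ici]; linarith) hlam
    rw [hmin, hmu_eq]
    linarith [mul_log_three_le_H_three_div hx0.le hx1]
  · have hmin : min lam (1 / mu) = lam / x := by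
      rw [min_eq_right (by rw [div_le_iff₀ hmu]; linarith), hmu_eq, one_div_div]
    have h3x : 3 * x ≤ lam := by nlinarith
    have h := hmono (a := 3 * x) (b := lam) (by rw [mem_Ici]; linarith)
      (by rw [mem_Ici]; linarith) h3x
    simp only at h
    rw [show x / (3 * x) = 1 / 3 by field_simp, log_mul (by norm_num) hx0.ne'] at h
    rw [hmin, hmu_eq, log_div hlam0.ne' hx0.ne']
    linarith [mul_log_three_le_H_three_mul hx1]
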